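/- Lower bound part of Lemma on vector growth: for the Jordan block Λ with |λ| > 1 and a vector v with x₀ ≠ 0, the bottom coordinate satisfies |(Λ^n v)_ℓ| ≥ C n^ℓ |λ|^n for some constant C > 0 and all sufficiently large n. -/

import Mathlib

/-- The (ℓ+1)×(ℓ+1) Jordan block with eigenvalue `lam`: `lam` on the diagonal,
1's on the subdiagonal. -/
noncomputable def jordanBlock (ℓ : ℕ) (lam : ℂ) :
    Matrix (Fin (ℓ + 1)) (Fin (ℓ + 1)) ℂ :=
  fun i j => if i = j then lam else if (i : ℕ) = (j : ℕ) + 1 then 1 else 0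

/-- The maximum of the absolute values of the entries of a vector. -/
noncomputable def vnorm {ℓ : ℕ} (v : Fin (ℓ + 1) → ℂ) : ℝ :=
  Finset.univ.sup' Finset.univ_nonempty (fun i => ‖v i‖)

/-!
Write `Λ = λ • 1 + S` with `S` the nilpotent lower shift. The binomial theorem gives
`(Λⁿ v)_ℓ = ∑_{k ≤ ℓ} C(n, k) λ^(n-k) v_{ℓ-k}` for `n ≥ ℓ`, and since `C(n, k) ~ nᵏ / k!`, after
dividing by `λⁿ nˡ` only the term `k = ℓ` survives: `(Λⁿ v)_ℓ / (λⁿ nˡ) → v₀ / (λˡ ℓ!) ≠ 0`.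
As soon as the quotient has norm above half that of its limit, `‖(Λⁿ v)_ℓ‖ ≥ C nˡ ‖λ‖ⁿ`.
-/

open Filter Topology Asymptotics Matrix

theorem eventually_half_norm_mul_le_of_tendsto_div {α 𝕜 : Type*} [NormedField 𝕜] {l : Filter α}
    {u w : α → 𝕜} {L : 𝕜} (hL : L ≠ 0) (h : Tendsto (fun x => u x / w x) l (𝓝 L)) :
    ∀ᶠ x in l, ‖L‖ / 2 * ‖w x‖ ≤ ‖u x‖ := by
  filter_upwards [h.norm.eventually_const_lt (half_lt_self (norm_pos_iff.2 hL))] with x hx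
  rcases eq_or_ne (w x) 0 with hw | hw
  · simp [hw]
  · rw [norm_div, lt_div_iff₀ (norm_pos_iff.2 hw)] at hx
    exact hx.le

theorem tendsto_choose_div_pow_self (k : ℕ) :
    Tendsto (fun n : ℕ => (n.choose k : ℝ) / n ^ k) atTop (𝓝 (k.factorial : ℝ)⁻¹) := by
  refine ((isEquivalent_choose k).div IsEquivalent.refl).symm.tendsto_nhds ?_
  refine tendsto_const_nhds.congr' ?_
  filter_upwards [eventually_ne_atTop 0] with n hn
  have : (n : ℝ) ^ k ≠ 0 := pow_ne_zero _ (Nat.cast_ne_zero.2 hn)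
  simp [div_div_cancel_left' this]

theorem tendsto_choose_div_pow_of_lt {k ℓ : ℕ} (h : k < ℓ) :
    Tendsto (fun n : ℕ => (n.choose k : ℝ) / n ^ ℓ) atTop (𝓝 0) :=
  ((isTheta_choose k).isBigO.trans_isLittleO
    ((isLittleO_pow_pow_atTop_of_lt h).comp_tendsto tendsto_natCast_atTop_atTop)).tendsto_div_nhds_zero

def lowerShift (R : Type*) [Zero R] [One R] (m : ℕ) : Matrix (Fin m) (Fin m) R :=
  Matrix.of fun i j => if (i : ℕ) = j + 1 then 1 else 0

section lowerShift

variable {R : Type*} [Semiring R] {m : ℕ}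

theorem lowerShift_mulVec (w : Fin m → R) (i : Fin m) :
    (lowerShift R m *ᵥ w) i = if h : 1 ≤ (i : ℕ) then w ⟨i - 1, by omega⟩ else 0 := by
  simp only [mulVec, dotProduct, lowerShift, of_apply, ite_mul, one_mul, zero_mul]
  split_ifs with h
  · rw [Finset.sum_eq_single ⟨i - 1, by omega⟩]
    · rw [if_pos (by simp only; omega)]
    · intro j _ hj
      rw [if_neg fun hij => hj (Fin.ext (by simp only; omega))]
    · simp
  · apply Finset.sum_eq_zero
    intro j _
    rw [if_neg (by omega)]

theorem lowerShift_pow_mulVec (k : ℕ) (w : Fin m → R) (i : Fin m) :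
    (lowerShift R m ^ k *ᵥ w) i = if h : k ≤ (i : ℕ) then w ⟨i - k, by omega⟩ else 0 := by
  induction k generalizing i with
  | zero => simp
  | succ k ih =>
    rw [pow_succ', ← mulVec_mulVec, lowerShift_mulVec]
    by_cases hk : k + 1 ≤ (i : ℕ)
    · rw [dif_pos (by omega), ih, dif_pos (by simp only; omega), dif_pos hk]
      congr 2
      simp only
      omega
    · rw [dif_neg hk]
      split_ifs
      · rw [ih, dif_neg (by simp only; omega)]
      · rfl

end lowerShift

theorem jordanBlock_eq_smul_one_add_lowerShift (ℓ : ℕ) (lam : ℂ) :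
    jordanBlock ℓ lam = lam • 1 + lowerShift ℂ (ℓ + 1) := by
  ext i j
  by_cases h : i = j
  · subst h; simp [jordanBlock, lowerShift]
  · simp [jordanBlock, lowerShift, h, one_apply_ne h]

theorem jordanBlock_pow_mulVec_last {ℓ n : ℕ} (lam : ℂ) (v : Fin (ℓ + 1) → ℂ) (hn : ℓ ≤ n) :
    ((jordanBlock ℓ lam) ^ n *ᵥ v) (Fin.last ℓ) =
      ∑ k : Fin (ℓ + 1), (n.choose k : ℂ) * lam ^ (n - k) * v k.rev := by
  have hcomm : Commute (lowerShift ℂ (ℓ + 1)) (lam • 1) := (Commute.one_right _).smul_right lam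
  rw [jordanBlock_eq_smul_one_add_lowerShift, add_comm (lam • 1), hcomm.add_pow, sum_mulVec,
    Finset.sum_apply]
  simp only [smul_pow, one_pow, mul_smul_comm, mul_one, ← mulVec_mulVec, natCast_mulVec, mulVec_smul,
    smul_mulVec, Pi.smul_apply, smul_eq_mul, lowerShift_pow_mulVec, Fin.val_last]
  rw [← Finset.sum_subset (Finset.range_subset_range.2 (by omega : ℓ + 1 ≤ n + 1)), Finset.sum_range]
  · refine Finset.sum_congr rfl fun k _ => ?_
    rw [dif_pos (by omega), mul_assoc]
    congr 3
    ext
    simp only [Fin.val_rev]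
    omega
  · intro k _ hk
    rw [dif_neg (by rw [Finset.mem_range] at hk; omega), mul_zero, mul_zero]

theorem tendsto_jordanBlock_pow_mulVec_last_div {ℓ : ℕ} {lam : ℂ} (hlam : lam ≠ 0)
    (v : Fin (ℓ + 1) → ℂ) :
    Tendsto (fun n : ℕ => ((jordanBlock ℓ lam) ^ n *ᵥ v) (Fin.last ℓ) / (lam ^ n * n ^ ℓ)) atTop
      (𝓝 (v 0 / (lam ^ ℓ * ℓ.factorial))) := by
  have hform : ∀ᶠ n : ℕ in atTop,
      ((jordanBlock ℓ lam) ^ n *ᵥ v) (Fin.last ℓ) / (lam ^ n * n ^ ℓ) =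
        ∑ k : Fin (ℓ + 1), (((n.choose k : ℝ) / n ^ ℓ : ℝ) : ℂ) * (v k.rev / lam ^ (k : ℕ)) := by
    filter_upwards [eventually_ge_atTop ℓ] with n hn
    rw [jordanBlock_pow_mulVec_last lam v hn, Finset.sum_div]
    refine Finset.sum_congr rfl fun k _ => ?_
    rw [pow_sub₀ lam hlam (by omega)]
    push_cast
    field_simp
  rw [tendsto_congr' hform]
  simp only [Fin.sum_univ_castSucc]
  convert (tendsto_finsetSum Finset.univ fun (i : Fin ℓ) _ =>
    ((tendsto_choose_div_pow_of_lt i.isLt).ofReal.mul_const (v i.castSucc.rev / lam ^ (i : ℕ)))).add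
    ((tendsto_choose_div_pow_self ℓ).ofReal.mul_const (v 0 / lam ^ ℓ)) using 2
  · simp
  · push_cast
    simp only [zero_mul, Finset.sum_const_zero, zero_add]
    field_simp

theorem jordan_power_vec_lower (ℓ : ℕ) (lam : ℂ) (hlam : 1 < ‖lam‖)
    (v : Fin (ℓ + 1) → ℂ) (hv : v 0 ≠ 0) :
    ∃ (C : ℝ) (N₀ : ℕ), 0 < C ∧
      ∀ n : ℕ, N₀ ≤ n →
        C * (n : ℝ) ^ ℓ * ‖lam‖ ^ n ≤
          ‖((jordanBlock ℓ lam) ^ n).mulVec v (Fin.last ℓ)‖ := by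
  have hlam₀ : lam ≠ 0 := norm_pos_iff.1 (one_pos.trans hlam)
  have hL : v 0 / (lam ^ ℓ * ℓ.factorial) ≠ 0 := by
    have := ℓ.factorial_ne_zero
    positivity
  obtain ⟨N₀, hN₀⟩ := eventually_atTop.1
    (eventually_half_norm_mul_le_of_tendsto_div hL (tendsto_jordanBlock_pow_mulVec_last_div hlam₀ v))
  refine ⟨_, N₀, half_pos (norm_pos_iff.2 hL), fun n hn => ?_⟩
  simpa [norm_mul, norm_pow, mul_comm, mul_left_comm, mul_assoc] using hN₀ n hn
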